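/- Let P1 and P2 be disjoint sets of vertices with c1 ∈ P1 and c2 ∈ P2, and let S = S(P1, P2, c1, c2) be the binary star graph. Then τ_{c2}(τ_{c1}(τ_{c2}(S)) − c1) is the simple graph whose edges are exactly: the pairs {c2, z} with z ∈ P2 \ {c2}, together with all pairs {u, z} with u ∈ P1 \ {c1} and z ∈ P2 \ {c2}. -/

import Mathlib

open SimpleGraph

universe u

/-- Local complementation of `G` at vertex `i`: adjacency is toggled exactly among
pairs of neighbors of `i`. -/
def localComp {V : Type u} (G : SimpleGraph V) (i : V) : SimpleGraph V where
  Adj a b := a ≠ b ∧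
    ((G.Adj i a ∧ G.Adj i b) ∧ ¬ G.Adj a b ∨ ¬(G.Adj i a ∧ G.Adj i b) ∧ G.Adj a b)
  symm := by
    constructor
    rintro a b ⟨hne, h⟩
    refine ⟨hne.symm, ?_⟩
    rcases h with ⟨⟨ha, hb⟩, hab⟩ | ⟨h1, h2⟩
    · exact Or.inl ⟨⟨hb, ha⟩, fun h => hab h.symm⟩
    · exact Or.inr ⟨fun h => h1 ⟨h.2, h.1⟩, h2.symm⟩
  loopless := ⟨fun a h => h.1 rfl⟩

/-- Vertex deletion `G − i`: remove every edge incident to `i` (the vertex stays,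
isolated). -/
def delVert {V : Type u} (G : SimpleGraph V) (i : V) : SimpleGraph V where
  Adj a b := G.Adj a b ∧ a ≠ i ∧ b ≠ i
  symm := ⟨fun _ _ ⟨h, ha, hb⟩ => ⟨h.symm, hb, ha⟩⟩
  loopless := ⟨fun a h => G.loopless.irrefl a h.1⟩

/-- Deletion of a set `Z` of vertices: remove every edge incident to a vertex of `Z`. -/
def delSet {V : Type u} (G : SimpleGraph V) (Z : Set V) : SimpleGraph V where
  Adj a b := G.Adj a b ∧ a ∉ Z ∧ b ∉ Z
  symm := ⟨fun _ _ ⟨h, ha, hb⟩ => ⟨h.symm, hb, ha⟩⟩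
  loopless := ⟨fun a h => G.loopless.irrefl a h.1⟩

/-- Star graph on the set `W` with center `c`: edges are exactly the pairs `{c, u}`
for `u ∈ W \ {c}`. -/
def starGraph {V : Type u} (W : Set V) (c : V) : SimpleGraph V :=
  SimpleGraph.fromRel (fun a b => a = c ∧ b ∈ W \ {c})

/-- Complete graph on the set `A`: edges are exactly all pairs of distinct elements
of `A`. -/
def completeOn {V : Type u} (A : Set V) : SimpleGraph V :=
  SimpleGraph.fromRel (fun a b => a ∈ A ∧ b ∈ A)

/-- Complete bipartite graph on parts `A` and `B`: edges are exactly the pairs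
`{a, b}` with `a ∈ A` and `b ∈ B`. -/
def completeBipartiteOn {V : Type u} (A B : Set V) : SimpleGraph V :=
  SimpleGraph.fromRel (fun a b => a ∈ A ∧ b ∈ B)

/-- Binary star graph `S(P1, P2, c1, c2)`: edges are exactly the pairs `{c1, u}`
with `u ∈ P2` together with the pairs `{u, c2}` with `u ∈ P1`. -/
def binaryStar {V : Type u} (P1 P2 : Set V) (c1 c2 : V) : SimpleGraph V :=
  SimpleGraph.fromRel (fun a b => (a = c1 ∧ b ∈ P2) ∨ (a ∈ P1 ∧ b = c2))

/-- The graph with the single edge `{c1, c2}`. -/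
def singleEdge {V : Type u} (c1 c2 : V) : SimpleGraph V :=
  SimpleGraph.fromRel (fun a b => a = c1 ∧ b = c2)


/-!
Local complementation at `i` is the symmetric difference with the complete graph on the
neighbourhood of `i`. Tracking neighbourhoods, the four operations turn `S` successively into
`S ⊔ K(P1)`, then the star at `c1` over `(P1 ∪ P2) \ {c1}` together with `K(P2)` and the complete
bipartite graph between `P1 \ {c1}` and `P2 \ {c2}`, then (deleting `c1`) `K(P2)` plus that
bipartite graph, and finally, complementing at `c2`, whose neighbourhood is `P2 \ {c2}`, the star
at `c2` plus the bipartite graph.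
-/

open scoped symmDiff

namespace SimpleGraph

variable {V : Type u}

lemma symmDiff_adj (G H : SimpleGraph V) (a b : V) :
    (G ∆ H).Adj a b ↔ Xor (G.Adj a b) (H.Adj a b) := by
  rw [symmDiff_def, sup_adj, sdiff_adj, sdiff_adj]
  rfl

end SimpleGraph

section

variable {V : Type u}

@[simp]
lemma completeOn_adj (A : Set V) (a b : V) :
    (completeOn A).Adj a b ↔ a ≠ b ∧ a ∈ A ∧ b ∈ A := by
  simp [completeOn, and_comm]

@[simp]
lemma starGraph_adj (W : Set V) (c a b : V) :
    (_root_.starGraph W c).Adj a b ↔ a = c ∧ b ∈ W \ {c} ∨ b = c ∧ a ∈ W \ {c} := by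
  simp only [_root_.starGraph, fromRel_adj]
  grind

@[simp]
lemma completeBipartiteOn_adj (A B : Set V) (a b : V) :
    (completeBipartiteOn A B).Adj a b ↔ a ≠ b ∧ (a ∈ A ∧ b ∈ B ∨ b ∈ A ∧ a ∈ B) := by
  simp [completeBipartiteOn]

@[simp]
lemma binaryStar_adj (P1 P2 : Set V) (c1 c2 a b : V) :
    (binaryStar P1 P2 c1 c2).Adj a b ↔ a ≠ b ∧
      (a = c1 ∧ b ∈ P2 ∨ a ∈ P1 ∧ b = c2 ∨ b = c1 ∧ a ∈ P2 ∨ b ∈ P1 ∧ a = c2) := by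
  simp only [binaryStar, fromRel_adj]
  tauto

@[simp]
lemma delVert_adj (G : SimpleGraph V) (i a b : V) :
    (delVert G i).Adj a b ↔ G.Adj a b ∧ a ≠ i ∧ b ≠ i := Iff.rfl

theorem localComp_eq_symmDiff (G : SimpleGraph V) (i : V) :
    localComp G i = G ∆ completeOn (G.neighborSet i) := by
  ext a b
  rw [symmDiff_adj, completeOn_adj]
  simp only [localComp, mem_neighborSet]
  constructor
  · rintro ⟨hab, h | h⟩
    · exact .inr ⟨⟨hab, h.1⟩, h.2⟩
    · exact .inl ⟨h.2, fun h' => h.1 h'.2⟩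
  · rintro (⟨h, h'⟩ | ⟨⟨hab, h⟩, h'⟩)
    · exact ⟨h.ne, .inr ⟨fun hn => h' ⟨h.ne, hn⟩, h⟩⟩
    · exact ⟨hab, .inl ⟨h, h'⟩⟩

section BinaryStar

variable {P1 P2 : Set V} {c1 c2 : V}

lemma localComp_binaryStar_right (hdisj : Disjoint P1 P2) (hc1 : c1 ∈ P1) (hc2 : c2 ∈ P2) :
    localComp (binaryStar P1 P2 c1 c2) c2 = binaryStar P1 P2 c1 c2 ⊔ completeOn P1 := by
  have hP := Set.disjoint_left.mp hdisj
  have hnbr : (binaryStar P1 P2 c1 c2).neighborSet c2 = P1 := by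
    ext a
    simp only [mem_neighborSet, binaryStar_adj]
    grind
  rw [localComp_eq_symmDiff, hnbr]
  ext a b
  simp only [symmDiff_adj, xor_iff_not_iff, sup_adj, binaryStar_adj, completeOn_adj]
  grind

lemma localComp_binaryStar_sup_completeOn_left (hdisj : Disjoint P1 P2) (hc1 : c1 ∈ P1)
    (hc2 : c2 ∈ P2) :
    localComp (binaryStar P1 P2 c1 c2 ⊔ completeOn P1) c1 =
      _root_.starGraph (P1 ∪ P2) c1 ⊔ completeOn P2 ⊔
        completeBipartiteOn (P1 \ {c1}) (P2 \ {c2}) := by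
  have hP := Set.disjoint_left.mp hdisj
  have hnbr : (binaryStar P1 P2 c1 c2 ⊔ completeOn P1).neighborSet c1 = (P1 ∪ P2) \ {c1} := by
    ext a
    simp only [mem_neighborSet, sup_adj, binaryStar_adj, completeOn_adj, Set.mem_sdiff,
      Set.mem_union, Set.mem_singleton_iff]
    grind
  rw [localComp_eq_symmDiff, hnbr]
  ext a b
  simp only [symmDiff_adj, xor_iff_not_iff, sup_adj, binaryStar_adj, completeOn_adj,
    _root_.starGraph_adj, completeBipartiteOn_adj, Set.mem_sdiff, Set.mem_union,
    Set.mem_singleton_iff]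
  grind

lemma delVert_starGraph_sup (hc1 : c1 ∉ P2) :
    delVert (_root_.starGraph (P1 ∪ P2) c1 ⊔ completeOn P2 ⊔
        completeBipartiteOn (P1 \ {c1}) (P2 \ {c2})) c1 =
      completeOn P2 ⊔ completeBipartiteOn (P1 \ {c1}) (P2 \ {c2}) := by
  ext a b
  simp only [delVert_adj, sup_adj, completeOn_adj, _root_.starGraph_adj, completeBipartiteOn_adj,
    Set.mem_sdiff, Set.mem_union, Set.mem_singleton_iff]
  grind

end BinaryStar

lemma localComp_completeOn_sup_completeBipartiteOn {A B : Set V} {c : V} (hAB : Disjoint A B)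
    (hc : c ∈ B) :
    localComp (completeOn B ⊔ completeBipartiteOn A (B \ {c})) c =
      _root_.starGraph B c ⊔ completeBipartiteOn A (B \ {c}) := by
  have hP := Set.disjoint_left.mp hAB
  have hnbr : (completeOn B ⊔ completeBipartiteOn A (B \ {c})).neighborSet c = B \ {c} := by
    ext a
    simp only [mem_neighborSet, sup_adj, completeOn_adj, completeBipartiteOn_adj, Set.mem_sdiff,
      Set.mem_singleton_iff]
    grind
  rw [localComp_eq_symmDiff, hnbr]
  ext a b
  simp only [symmDiff_adj, xor_iff_not_iff, sup_adj, completeOn_adj, _root_.starGraph_adj,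
    completeBipartiteOn_adj, Set.mem_sdiff, Set.mem_singleton_iff]
  grind

end

/-- `τ_{c2}(τ_{c1}(τ_{c2}(S)) − c1)` is the simple graph whose edges
are exactly: the pairs `{c2, z}` with `z ∈ P2 \ {c2}`, together with all pairs
`{u, z}` with `u ∈ P1 \ {c1}` and `z ∈ P2 \ {c2}`. -/
theorem stmt_15 {V : Type u} (P1 P2 : Set V) (hdisj : Disjoint P1 P2)
    (c1 c2 : V) (hc1 : c1 ∈ P1) (hc2 : c2 ∈ P2) :
    localComp (delVert (localComp (localComp (binaryStar P1 P2 c1 c2) c2) c1) c1) c2 =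
      SimpleGraph.fromRel (fun a b =>
        (a = c2 ∧ b ∈ P2 \ {c2}) ∨ (a ∈ P1 \ {c1} ∧ b ∈ P2 \ {c2})) := by
  rw [localComp_binaryStar_right hdisj hc1 hc2,
    localComp_binaryStar_sup_completeOn_left hdisj hc1 hc2,
    delVert_starGraph_sup (Set.disjoint_left.mp hdisj hc1),
    localComp_completeOn_sup_completeBipartiteOn
      (hdisj.mono_left Set.sdiff_subset) hc2]
  ext a b
  simp only [sup_adj, _root_.starGraph_adj, completeBipartiteOn_adj, fromRel_adj]
  grind
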